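/- Let K be algebraically closed and let M be an effective t-motif over K. Then there exists an integer N such that for all n ≥ N, the module M equipped with the twisted semilinear map σ_n defined by σ_n(m) = (t−θ)ⁿ·σ(m) (which represents the Carlitz twist M ⊗ Cⁿ) is finitely generated over K[σ_n]: there exists a finite subset S ⊆ M such that ⋃_{j≥0} σ_nʲ(S) spans M as a K-vector space. -/

import Mathlib

/-!
Put `Q = (X - θ) ^ (m + d)` and `T = u₀⁻¹ • adj S`, so that `((X - θ) ^ m • S) * T = Q • 1`
and `σₘ w = (X - θ) ^ m • S * τ w`.
Since `K` is perfect, the Frobenius twist `τ` is onto, so every `v` splits as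
`v = (v %ₘ Q) + σₘ w` with `τ w = T (v /ₘ Q)`. Once `m` exceeds the degrees of the entries of
`adj S`, the vector `w` has smaller degree than `v` whenever `deg v ≥ deg Q`; by induction on the
degree, the vectors `Xᵏ eᵢ` with `k < deg Q` generate `M` under `σₘ`.
-/

open Polynomial Matrix

theorem Submodule.span_iterate_orbit_le_comap {R M : Type*} [Semiring R] [AddCommMonoid M]
    [Module R M] {φ : R →+* R} (f : M →ₛₗ[φ] M) (s : Set M) :
    Submodule.span R {x | ∃ x₀ ∈ s, ∃ j : ℕ, x = f^[j] x₀} ≤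
      (Submodule.span R {x | ∃ x₀ ∈ s, ∃ j : ℕ, x = f^[j] x₀}).comap f := by
  rw [Submodule.span_le]
  rintro _ ⟨x₀, hx₀, j, rfl⟩
  exact Submodule.subset_span ⟨x₀, hx₀, j + 1, (Function.iterate_succ_apply' f j x₀).symm⟩

theorem Matrix.natDegree_mulVec_le {R ι : Type*} [Semiring R] [Fintype ι]
    {T : Matrix ι ι R[X]} {g : ι → R[X]} {a b : ℕ} (hT : ∀ i j, (T i j).natDegree ≤ a)
    (hg : ∀ j, (g j).natDegree ≤ b) (i : ι) : ((T *ᵥ g) i).natDegree ≤ a + b :=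
  natDegree_sum_le_of_forall_le _ _ fun j _ =>
    natDegree_mul_le.trans (add_le_add (hT i j) (hg j))

theorem Matrix.mul_smul_adjugate_of_det_eq {K ι : Type*} [Field K] [Fintype ι] [DecidableEq ι]
    {S : Matrix ι ι K[X]} {u : K} {P : K[X]} (hdet : S.det = C u * P) (hu : u ≠ 0) :
    S * (C u⁻¹ • adjugate S) = P • 1 := by
  rw [Matrix.mul_smul, mul_adjugate, hdet, smul_smul, ← mul_assoc, ← C_mul,
    inv_mul_cancel₀ hu, C_1, one_mul]

variable {K ι : Type*} [Field K] [Fintype ι]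

/-- For `φ` a power of Frobenius, this is the map `σ` of a t-motif written in a `K[X]`-basis. -/
noncomputable def Matrix.semilinearMulVec (φ : K →+* K) (S : Matrix ι ι K[X]) :
    (ι → K[X]) →ₛₗ[φ] (ι → K[X]) where
  toFun w := S *ᵥ fun i => (w i).map φ
  map_add' v w := by simp only [Pi.add_apply, Polynomial.map_add, ← mulVec_add]; rfl
  map_smul' c w := by simp only [Pi.smul_apply, Polynomial.map_smul, ← mulVec_smul]; rfl

theorem Matrix.semilinearMulVec_apply (φ : K →+* K) (S : Matrix ι ι K[X]) (w : ι → K[X]) :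
    semilinearMulVec φ S w = S *ᵥ fun i => (w i).map φ := rfl

variable [DecidableEq ι]

open Classical in
variable (K ι) in
noncomputable def Polynomial.monomialVectors (D : ℕ) : Finset (ι → K[X]) :=
  (Finset.univ ×ˢ Finset.range D).image fun ik => Pi.single ik.1 (X ^ ik.2)

theorem Polynomial.mem_span_monomialVectors {D : ℕ} {v : ι → K[X]}
    (hv : ∀ i, (v i).natDegree < D) :
    v ∈ Submodule.span K (monomialVectors K ι D : Set (ι → K[X])) := by
  classical
  rw [← Finset.univ_sum_single v]
  refine Submodule.sum_mem _ fun i _ => ?_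
  rw [as_sum_range' (v i) D (hv i)]
  change LinearMap.single K (fun _ => K[X]) i _ ∈ _
  simp only [map_sum, ← C_mul_X_pow_eq_monomial, ← smul_eq_C_mul, map_smul]
  refine Submodule.sum_mem _ fun k hk => Submodule.smul_mem _ _ (Submodule.subset_span ?_)
  exact Finset.mem_image.2 ⟨(i, k), Finset.mem_product.2 ⟨Finset.mem_univ i, hk⟩, rfl⟩

namespace Matrix

variable {φ : K →+* K} {S T : Matrix ι ι K[X]} {Q : K[X]}

theorem exists_eq_modByMonic_add_semilinearMulVec (hφ : Function.Surjective φ)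
    (hST : S * T = Q • 1) (v : ι → K[X]) :
    ∃ w : ι → K[X], v = (fun i => v i %ₘ Q) + semilinearMulVec φ S w ∧
      ∀ i, (w i).natDegree = ((T *ᵥ fun j => v j /ₘ Q) i).natDegree := by
  choose w hw using fun i => map_surjective φ hφ ((T *ᵥ fun j => v j /ₘ Q) i)
  refine ⟨w, ?_, fun i => by rw [← hw i, natDegree_map_eq_of_injective φ.injective]⟩
  have hSw : semilinearMulVec φ S w = Q • fun j => v j /ₘ Q := by
    rw [semilinearMulVec_apply, funext hw, mulVec_mulVec, hST, smul_mulVec, one_mulVec]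
  funext i
  rw [hSw]
  exact (modByMonic_add_div (v i) Q).symm

theorem span_iterate_semilinearMulVec_monomialVectors_eq_top (hφ : Function.Surjective φ)
    (hQ : Q.Monic) (hST : S * T = Q • 1) (hT : ∀ i j, (T i j).natDegree < Q.natDegree) :
    Submodule.span K {x | ∃ x₀ ∈ monomialVectors K ι Q.natDegree, ∃ j : ℕ,
      x = (semilinearMulVec φ S)^[j] x₀} = ⊤ := by
  set V := Submodule.span K {x | ∃ x₀ ∈ monomialVectors K ι Q.natDegree, ∃ j : ℕ,
      x = (semilinearMulVec φ S)^[j] x₀}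
  have hQ1 (i : ι) : Q ≠ 1 := by
    rintro rfl
    simpa using hT i i
  have hlow {v : ι → K[X]} (hv : ∀ i, (v i).natDegree < Q.natDegree) : v ∈ V := by
    refine Submodule.span_mono ?_ (mem_span_monomialVectors hv)
    exact fun x hx => ⟨x, hx, 0, rfl⟩
  have key (b : ℕ) : ∀ v : ι → K[X], (∀ i, (v i).natDegree < Q.natDegree + b) → v ∈ V := by
    induction b with
    | zero => exact fun v hv => hlow hv
    | succ b ih =>
      intro v hv
      obtain ⟨w, hvw, hw⟩ := exists_eq_modByMonic_add_semilinearMulVec hφ hST v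
      have hwV : w ∈ V := ih w fun i => by
        have hDi := hT i i
        have hg (j : ι) : (v j /ₘ Q).natDegree ≤ b := by
          have := hv j
          rw [natDegree_divByMonic _ hQ]
          omega
        have := natDegree_mulVec_le (fun i j => Nat.le_sub_one_of_lt (hT i j)) hg i
        rw [hw i]
        omega
      rw [hvw]
      exact add_mem (hlow fun i => natDegree_modByMonic_lt _ hQ (hQ1 i))
        (Submodule.span_iterate_orbit_le_comap _ _ hwV)
  refine Submodule.eq_top_iff'.2 fun v => ?_
  obtain ⟨b, hb⟩ := Finite.exists_le fun i => (v i).natDegree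
  exact key (b + 1) v fun i => by have := hb i; omega

end Matrix

theorem stmt_18
    (p n : ℕ) [Fact p.Prime]
    (K : Type) [Field K] [CharP K p] [IsAlgClosed K] (θ : K)
    (r : ℕ) (S : Matrix (Fin r) (Fin r) (Polynomial K))
    (u₀ : Kˣ) (d : ℕ)
    (hdet : S.det = C (u₀ : K) * (X - C θ) ^ d) :
    ∃ N : ℕ, ∀ m ≥ N,
      ∃ S₀ : Finset (Fin r → Polynomial K),
        Submodule.span K
          {x : Fin r → Polynomial K | ∃ m₀ ∈ S₀, ∃ j : ℕ,
            x = (fun w : Fin r → Polynomial K =>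
              ((X - C θ) ^ m) •
                S.mulVec fun i =>
                  Polynomial.mapRingHom (iterateFrobenius K p n) (w i))^[j] m₀}
          = ⊤ := by
  obtain ⟨A, hA⟩ := Finite.exists_le fun ij : Fin r × Fin r => (adjugate S ij.1 ij.2).natDegree
  refine ⟨A + 1, fun m hm => ⟨monomialVectors K (Fin r) (m + d), ?_⟩⟩
  have hQdeg : ((X - C θ) ^ (m + d)).natDegree = m + d := by simp
  have hST : ((X - C θ) ^ m • S) * (C (u₀⁻¹ : K) • adjugate S) = (X - C θ) ^ (m + d) • 1 := by
    rw [Matrix.smul_mul, mul_smul_adjugate_of_det_eq hdet u₀.ne_zero, smul_smul, pow_add]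
  have hT (i j : Fin r) :
      ((C (u₀⁻¹ : K) • adjugate S) i j).natDegree < ((X - C θ) ^ (m + d)).natDegree := by
    have : (adjugate S i j).natDegree ≤ A := hA (i, j)
    rw [Matrix.smul_apply, smul_eq_mul, natDegree_C_mul (inv_ne_zero u₀.ne_zero), hQdeg]
    omega
  have hσ : (fun w : Fin r → K[X] =>
        (X - C θ) ^ m • S *ᵥ fun i => mapRingHom (iterateFrobenius K p n) (w i)) =
      semilinearMulVec (iterateFrobenius K p n) ((X - C θ) ^ m • S) := by
    funext w
    rw [semilinearMulVec_apply, smul_mulVec]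
    rfl
  rw [hσ, ← hQdeg]
  exact span_iterate_semilinearMulVec_monomialVectors_eq_top
    (iterateFrobeniusEquiv K p n).surjective ((monic_X_sub_C θ).pow _) hST hT
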